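/- Let f : ℝⁿ → ℝ be differentiable with gradient g = ∇f, let μ > 0, fix x ∈ ℝⁿ and a symmetric positive definite n×n matrix H. Define ℓ(y) = f(x) + g(x)ᵀ(y − x) + μ‖y‖₁ and q(y) = ℓ(y) + ½(y − x)ᵀH(y − x). If ȳ is a minimizer of q over ℝⁿ, then q(x) − q(ȳ) ≥ ½(ℓ(x) − ℓ(ȳ)). -/

import Mathlib

open scoped RealInnerProductSpace

variable {n : ℕ}
local notation "E" => EuclideanSpace ℝ (Fin n)
local notation "CLM" => Matrix.toEuclideanCLM (𝕜 := ℝ)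

open Set Filter Topology

/-!
Write `d = ȳ - x` and `Q = dᵀHd`, so that `q x = ℓ x` and `q ȳ = ℓ ȳ + Q / 2`. Comparing `q ȳ`
with `q` at `x + t d` and using the convexity of `ℓ` on the segment gives
`(1 - t) (ℓ x - ℓ ȳ) ≥ (1 - t²) Q / 2`, i.e. `ℓ x - ℓ ȳ ≥ (1 + t) Q / 2` for `0 ≤ t < 1`.
Letting `t → 1` yields `ℓ x - ℓ ȳ ≥ Q`, which is the claim.
-/

theorem le_of_forall_mem_Ico_mul_le {Q a : ℝ} (h : ∀ t ∈ Ico (0 : ℝ) 1, (1 + t) / 2 * Q ≤ a) :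
    Q ≤ a := by
  have hlim : Tendsto (fun t : ℝ => (1 + t) / 2 * Q) (𝓝[<] 1) (𝓝 Q) := by
    have hcont : Continuous fun t : ℝ => (1 + t) / 2 * Q := by fun_prop
    simpa using (hcont.tendsto 1).mono_left nhdsWithin_le_nhds
  exact le_of_tendsto hlim (eventually_of_mem (Ico_mem_nhdsLT zero_lt_one) h)

theorem ConvexOn.inner_map_self_le_sub_of_forall_le {F : Type*} [NormedAddCommGroup F]
    [InnerProductSpace ℝ F] {ℓ : F → ℝ} (hℓ : ConvexOn ℝ univ ℓ) (A : F →L[ℝ] F) {x y : F}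
    (hmin : ∀ z, ℓ y + 1 / 2 * ⟪y - x, A (y - x)⟫ ≤ ℓ z + 1 / 2 * ⟪z - x, A (z - x)⟫) :
    ⟪y - x, A (y - x)⟫ ≤ ℓ x - ℓ y := by
  set Q := ⟪y - x, A (y - x)⟫
  refine le_of_forall_mem_Ico_mul_le fun t ⟨ht0, ht1⟩ => ?_
  have hseg : ℓ ((1 - t) • x + t • y) ≤ (1 - t) * ℓ x + t * ℓ y :=
    hℓ.2 trivial trivial (by linarith) ht0 (by ring)
  have hquad : ⟪(1 - t) • x + t • y - x, A ((1 - t) • x + t • y - x)⟫ = t ^ 2 * Q := by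
    have : (1 - t) • x + t • y - x = t • (y - x) := by
      simp only [sub_smul, one_smul, smul_sub]; abel
    rw [this, map_smul, real_inner_smul_left, real_inner_smul_right]
    ring
  have hcomp := hmin ((1 - t) • x + t • y)
  rw [hquad] at hcomp
  refine le_of_mul_le_mul_left ?_ (sub_pos.2 ht1)
  linarith

theorem convexOn_sum_abs : ConvexOn ℝ univ fun y : E => ∑ i, |y i| := by
  have h := Finset.sum_induction (s := Finset.univ) (fun i (y : E) => |y i|) (ConvexOn ℝ univ)
    (fun _ _ => ConvexOn.add) (convexOn_const 0 convex_univ)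
    fun i _ => (convexOn_norm convex_univ).comp_linearMap (EuclideanSpace.proj i).toLinearMap
  simpa only [Finset.sum_fn] using h

theorem stmt_16_general
    (f : E → ℝ) (g : E → E)
    (μ : ℝ) (hμ : 0 < μ)
    (x : E)
    (H : Matrix (Fin n) (Fin n) ℝ)
    (ℓ q : E → ℝ)
    (hℓ : ∀ y, ℓ y = f x + ⟪g x, y - x⟫ + μ * ∑ i, |y i|)
    (hq : ∀ y, q y = ℓ y + (1 / 2) * ⟪y - x, CLM H (y - x)⟫)
    (ybar : E) (hmin : ∀ z, q ybar ≤ q z) :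
    q x - q ybar ≥ (1 / 2) * (ℓ x - ℓ ybar) := by
  have hconv : ConvexOn ℝ univ ℓ := by
    have hlin : ConvexOn ℝ univ fun y => ⟪g x, y⟫ :=
      (innerSL ℝ (g x)).toLinearMap.convexOn convex_univ
    refine ((hlin.add_const (f x - ⟪g x, x⟫)).add (convexOn_sum_abs.smul hμ.le)).congr
      fun y _ => ?_
    simp only [hℓ, Pi.add_apply, smul_eq_mul, inner_sub_right]
    ring
  have hkey := hconv.inner_map_self_le_sub_of_forall_le (CLM H) fun z => by
    simpa only [hq] using hmin z
  rw [hq, hq, sub_self, inner_zero_left]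
  linarith

/-- if `ȳ` minimizes `q`, then `q(x) - q(ȳ) ≥ ½(ℓ(x) - ℓ(ȳ))`. -/
theorem stmt_16
    (f : E → ℝ) (g : E → E)
    (hg : ∀ y, HasGradientAt f (g y) y)
    (μ : ℝ) (hμ : 0 < μ)
    (x : E)
    (H : Matrix (Fin n) (Fin n) ℝ) (hpd : H.PosDef)
    (ℓ q : E → ℝ)
    (hℓ : ∀ y, ℓ y = f x + ⟪g x, y - x⟫ + μ * ∑ i, |y i|)
    (hq : ∀ y, q y = ℓ y + (1 / 2) * ⟪y - x, CLM H (y - x)⟫)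
    (ybar : E) (hmin : ∀ z, q ybar ≤ q z) :
    q x - q ybar ≥ (1 / 2) * (ℓ x - ℓ ybar) :=
  stmt_16_general f g μ hμ x H ℓ q hℓ hq ybar hmin
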